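/- arXiv:1811.11831 — 2 statements merged into one kernel-verified Lean document; each statement's English description precedes it below -/
import Mathlib

section
/- The 8×8 symmetric integer matrix M with diagonal (2,2,2,2,2,2,4,2), with M(j,j+1) = M(j+1,j) = 1 for j = 1,...,5, M(6,7) = M(7,6) = 2, M(7,8) = M(8,7) = 1, and all other entries zero, is positive definite, even, and has determinant 1; hence it is congruent over ℤ to the E8 form. -/
/-!
Every claimed property of `Mlin` is read off an explicit integer certificate.
A matrix `L` with `Lᵀ * L = 4 • Mlin` writes four times the quadratic form as a sum of eight
squares, which gives positivity once `Mlin` is known to be nonsingular. An integer inverse makes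
`det Mlin` a unit, i.e. `±1`, and `det L ^ 2 = 4 ^ 8 * det Mlin` excludes `-1`. Evenness holds for
any symmetric form with even diagonal. Instead of appealing to the uniqueness of the even
unimodular positive definite lattice of rank 8, the congruence with `E8` is exhibited by an explicit
change of basis together with its inverse.
-/

open Matrix

/-- The intersection matrix of the linear diagram `L(2^[6] ·⁽²⁾ 4 · 2)`:
diagonal `(2,2,2,2,2,2,4,2)`, consecutive entries `1` along the first six,
geometric linking `2` between the sixth and seventh, `1` between the last two. -/
def Mlin : Matrix (Fin 8) (Fin 8) ℤ :=
  !![2, 1, 0, 0, 0, 0, 0, 0;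
     1, 2, 1, 0, 0, 0, 0, 0;
     0, 1, 2, 1, 0, 0, 0, 0;
     0, 0, 1, 2, 1, 0, 0, 0;
     0, 0, 0, 1, 2, 1, 0, 0;
     0, 0, 0, 0, 1, 2, 2, 0;
     0, 0, 0, 0, 0, 2, 4, 1;
     0, 0, 0, 0, 0, 0, 1, 2]

/-- The `E8` intersection matrix: the positive definite even unimodular rank 8
form, given by the `E8` plumbing graph (chain `v₁ ⋯ v₇` plus edge `v₅v₈`),
all weights `2`. -/
def E8 : Matrix (Fin 8) (Fin 8) ℤ :=
  !![2, 1, 0, 0, 0, 0, 0, 0;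
     1, 2, 1, 0, 0, 0, 0, 0;
     0, 1, 2, 1, 0, 0, 0, 0;
     0, 0, 1, 2, 1, 0, 0, 0;
     0, 0, 0, 1, 2, 1, 0, 1;
     0, 0, 0, 0, 1, 2, 1, 0;
     0, 0, 0, 0, 0, 1, 2, 0;
     0, 0, 0, 0, 1, 0, 0, 2]

section QuadraticForm

variable {n R : Type*} [Fintype n]

theorem dotProduct_transpose_mul_self_mulVec [CommRing R] (L : Matrix n n R) (x : n → R) :
    x ⬝ᵥ (Lᵀ * L) *ᵥ x = L *ᵥ x ⬝ᵥ L *ᵥ x := by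
  rw [← mulVec_mulVec, dotProduct_transpose_mulVec]

theorem dotProduct_mulVec_pos_of_transpose_mul_self_eq_smul [DecidableEq n] [CommRing R]
    [LinearOrder R] [IsStrictOrderedRing R] {M L : Matrix n n R} {c : R} (hc : 0 < c)
    (hL : Lᵀ * L = c • M) (hM : M.det ≠ 0) {x : n → R} (hx : x ≠ 0) :
    0 < x ⬝ᵥ M *ᵥ x := by
  have hLx : L *ᵥ x ≠ 0 := by
    intro hLx
    have hMx : M *ᵥ x = 0 := by
      have h : c • M *ᵥ x = 0 := by
        rw [← smul_mulVec, ← hL, ← mulVec_mulVec, hLx, mulVec_zero]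
      exact (smul_eq_zero.mp h).resolve_left hc.ne'
    exact hM (exists_mulVec_eq_zero_iff.mp ⟨x, hx, hMx⟩)
  have hsq : 0 < L *ᵥ x ⬝ᵥ L *ᵥ x :=
    lt_of_le_of_ne' (Finset.sum_nonneg fun _ _ => mul_self_nonneg _)
      (dotProduct_self_eq_zero.not.mpr hLx)
  have hcq : c * (x ⬝ᵥ M *ᵥ x) = L *ᵥ x ⬝ᵥ L *ᵥ x := by
    rw [← dotProduct_transpose_mul_self_mulVec, hL, smul_mulVec, dotProduct_smul, smul_eq_mul]
  exact pos_of_mul_pos_right (hcq ▸ hsq) hc.le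

theorem det_eq_one_of_isUnit_of_transpose_mul_self_eq_smul [DecidableEq n]
    {M L : Matrix n n ℤ} {c : ℤ} (hc : 0 < c) (hL : Lᵀ * L = c • M) (hM : IsUnit M.det) :
    M.det = 1 := by
  have hdet : L.det * L.det = c ^ Fintype.card n * M.det := by
    simpa only [det_mul, det_transpose, det_smul] using congrArg det hL
  have hpow : 0 < c ^ Fintype.card n := pow_pos hc _
  rcases Int.isUnit_iff.mp hM with h | h
  · exact h
  · rw [h] at hdet
    nlinarith [mul_self_nonneg L.det]

theorem even_dotProduct_mulVec_of_isSymm [LinearOrder n] [CommRing R] {M : Matrix n n R}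
    (hM : M.IsSymm) (hdiag : ∀ i, Even (M i i)) (x : n → R) : Even (x ⬝ᵥ M *ᵥ x) := by
  choose half hhalf using hdiag
  let N : Matrix n n R := of fun i j => if i < j then M i j else if i = j then half i else 0
  have hN : M = N + Nᵀ := by
    ext i j
    rcases lt_trichotomy i j with hij | rfl | hji
    · simp [N, hij, hij.ne', hij.not_gt]
    · simpa [N] using hhalf i
    · simp [N, hji, hji.ne', hji.not_gt, hM.apply j i]
  refine ⟨x ⬝ᵥ N *ᵥ x, ?_⟩
  rw [hN, add_mulVec, dotProduct_add, dotProduct_transpose_mulVec]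

end QuadraticForm

def sumOfSquaresFactor : Matrix (Fin 8) (Fin 8) ℤ :=
  !![-2, -2, -2, -1, 0, 0, 0, 0;
     -2, 0, 2, 1, 0, 0, 0, 0;
     0, -2, 0, 1, 0, 0, 0, 0;
     0, 0, 0, -2, -2, -1, -1, 0;
     0, 0, 0, -1, 0, 2, 2, 0;
     0, 0, 0, 0, -2, -1, 1, 0;
     0, 0, 0, 0, 0, -1, -3, -2;
     0, 0, 0, 0, 0, -1, -1, 2]

def MlinInv : Matrix (Fin 8) (Fin 8) ℤ :=
  !![2, -3, 4, -5, 6, -7, 4, -2;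
     -3, 6, -8, 10, -12, 14, -8, 4;
     4, -8, 12, -15, 18, -21, 12, -6;
     -5, 10, -15, 20, -24, 28, -16, 8;
     6, -12, 18, -24, 30, -35, 20, -10;
     -7, 14, -21, 28, -35, 42, -24, 12;
     4, -8, 12, -16, 20, -24, 14, -7;
     -2, 4, -6, 8, -10, 12, -7, 4]

def toE8Basis : Matrix (Fin 8) (Fin 8) ℤ :=
  !![-1, -1, -1, -1, 0, 1, 1, 0;
     0, 1, 2, 2, 0, -2, -2, 0;
     0, -2, -3, -2, 0, 2, 2, 0;
     0, 2, 3, 3, 1, -2, -2, 0;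
     0, -3, -3, -3, -1, 3, 3, 0;
     0, 2, 2, 2, 0, -2, -1, 0;
     0, -1, -1, -1, 0, 1, 0, -1;
     0, 1, 1, 1, 0, -2, -2, 0]

def toE8BasisInv : Matrix (Fin 8) (Fin 8) ℤ :=
  !![-1, -1, 0, 1, 1, 0, 0, 1;
     0, 1, 0, -2, -2, 0, 0, -2;
     0, -2, -1, 2, 2, 0, 0, 2;
     0, 3, 1, -2, -2, 0, 0, -3;
     0, -3, 0, 3, 2, 0, 0, 3;
     0, 3, 0, -3, -3, -1, 0, -4;
     0, -2, 0, 2, 2, 1, 0, 2;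
     0, 1, 0, -1, -1, -1, -1, -1]

theorem sumOfSquaresFactor_transpose_mul_self :
    sumOfSquaresFactorᵀ * sumOfSquaresFactor = (4 : ℤ) • Mlin := by
  decide

theorem Mlin_mul_MlinInv : Mlin * MlinInv = 1 := by
  decide

theorem toE8Basis_transpose_mul_E8_mul_self : toE8Basisᵀ * E8 * toE8Basis = Mlin := by
  decide

theorem toE8Basis_mul_toE8BasisInv : toE8Basis * toE8BasisInv = 1 := by
  decide

theorem Mlin_isSymm : Mlin.IsSymm := by
  decide

theorem even_Mlin_diag (i : Fin 8) : Even (Mlin i i) := by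
  fin_cases i <;> decide

theorem stmt16 :
    (∀ x : Fin 8 → ℤ, x ≠ 0 → 0 < x ⬝ᵥ Mlin.mulVec x) ∧
    (∀ x : Fin 8 → ℤ, Even (x ⬝ᵥ Mlin.mulVec x)) ∧
    Mlin.det = 1 ∧
    (∃ A : Matrix (Fin 8) (Fin 8) ℤ, IsUnit A.det ∧ Mlin = Aᵀ * E8 * A) := by
  have hdet : Mlin.det = 1 :=
    det_eq_one_of_isUnit_of_transpose_mul_self_eq_smul (by norm_num)
      sumOfSquaresFactor_transpose_mul_self (isUnit_det_of_right_inverse Mlin_mul_MlinInv)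
  exact ⟨fun _ hx => dotProduct_mulVec_pos_of_transpose_mul_self_eq_smul (by norm_num)
      sumOfSquaresFactor_transpose_mul_self (hdet ▸ one_ne_zero) hx,
    even_dotProduct_mulVec_of_isSymm Mlin_isSymm even_Mlin_diag, hdet,
    toE8Basis, isUnit_det_of_right_inverse toE8Basis_mul_toE8BasisInv,
    toE8Basis_transpose_mul_E8_mul_self.symm⟩
end

section
/- Let L' be a negative definite integral lattice of rank r containing no vector of square −1, let N ≥ 0, and let L = L' ⊕ ⟨−1⟩^N. Then max over characteristic vectors c of L of (c² + rank L) equals max over characteristic vectors c' of L' of (c'² + rank L'), and this common value is at most rank L'. -/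
open Matrix

/-- A vector `c` is characteristic for the integral lattice with Gram matrix `M`
if `c · x ≡ x · x (mod 2)` for all lattice vectors `x`. -/
def IsCharacteristic {m : Type*} [Fintype m] (M : Matrix m m ℤ) (c : m → ℤ) : Prop :=
  ∀ x : m → ℤ, c ⬝ᵥ M.mulVec x ≡ x ⬝ᵥ M.mulVec x [ZMOD 2]

section Aux

lemma zmod2_mul_self : ∀ a : ZMod 2, a * a = a := by decide

/-- Over `ZMod 2`, the quadratic form of a symmetric matrix equals the diagonal linear form. -/
lemma quad_diag {n : ℕ} (M : Matrix (Fin n) (Fin n) (ZMod 2)) (hM : M.IsSymm)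
    (x : Fin n → ZMod 2) : x ⬝ᵥ M.mulVec x = ∑ i, M i i * x i := by
  classical
  have expand : x ⬝ᵥ M.mulVec x = ∑ p ∈ (Finset.univ ×ˢ Finset.univ : Finset (Fin n × Fin n)),
      x p.1 * M p.1 p.2 * x p.2 := by
    rw [Finset.sum_product]
    simp [dotProduct, Matrix.mulVec, Finset.mul_sum, mul_assoc]
  rw [expand]
  rw [← Finset.sum_filter_add_sum_filter_not _ (fun p : Fin n × Fin n => p.1 = p.2)]
  have hdiag : ∑ p ∈ (Finset.univ ×ˢ Finset.univ : Finset (Fin n × Fin n)).filter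
      (fun p => p.1 = p.2), x p.1 * M p.1 p.2 * x p.2 = ∑ i, M i i * x i := by
    rw [Finset.sum_filter]
    rw [Finset.sum_product]
    refine Finset.sum_congr rfl fun i _ => ?_
    rw [Finset.sum_eq_single i]
    · rw [if_pos rfl, show x i * M i i * x i = M i i * (x i * x i) by ring, zmod2_mul_self]
    · intro j _ hj
      rw [if_neg (fun h => hj h.symm)]
    · simp
  have hoff : ∑ p ∈ (Finset.univ ×ˢ Finset.univ : Finset (Fin n × Fin n)).filter
      (fun p => ¬ p.1 = p.2), x p.1 * M p.1 p.2 * x p.2 = 0 := by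
    refine Finset.sum_involution (fun p _ => (p.2, p.1)) ?_ ?_ ?_ ?_
    · intro p hp
      have hsym : M p.2 p.1 = M p.1 p.2 := (hM.apply p.2 p.1).symm
      have : x p.2 * M p.2 p.1 * x p.1 = x p.1 * M p.1 p.2 * x p.2 := by
        rw [hsym]; ring
      rw [this]
      exact CharTwo.add_self_eq_zero _
    · intro p hp _
      have hne : ¬ p.1 = p.2 := by simpa using (Finset.mem_filter.mp hp).2
      intro h
      exact hne (congrArg Prod.snd h)
    · intro p hp
      have hne : ¬ p.1 = p.2 := by simpa using (Finset.mem_filter.mp hp).2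
      simp only [Finset.mem_filter, Finset.mem_product, Finset.mem_univ, true_and]
      exact fun h => hne h.symm
    · intro p hp; rfl
  rw [hdiag, hoff, add_zero]

/-- Any symmetric integral lattice has a characteristic vector. -/
lemma exists_characteristic {n : ℕ} (M : Matrix (Fin n) (Fin n) ℤ) (hM : M.IsSymm) :
    ∃ c : Fin n → ℤ, IsCharacteristic M c := by
  classical
  set f : ℤ →+* ZMod 2 := Int.castRingHom (ZMod 2) with hf
  set M2 : Matrix (Fin n) (Fin n) (ZMod 2) := M.map f with hM2def
  have hM2 : M2.IsSymm := by
    unfold Matrix.IsSymm at hM ⊢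
    rw [hM2def, ← Matrix.transpose_map, hM]
  set d : Fin n → ZMod 2 := fun i => M2 i i with hd
  -- cast lemmas
  have cast_mulVec : ∀ (v : Fin n → ℤ), (f ∘ (M.mulVec v)) = M2.mulVec (f ∘ v) := by
    intro v; funext i; exact RingHom.map_mulVec f M v i
  have cast_dot : ∀ (v w : Fin n → ℤ), f (v ⬝ᵥ M.mulVec w) = (f ∘ v) ⬝ᵥ M2.mulVec (f ∘ w) := by
    intro v w
    rw [RingHom.map_dotProduct, cast_mulVec]
  -- solve M2 y = d over ZMod 2
  have hsolve : ∃ y : Fin n → ZMod 2, M2.mulVec y = d := by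
    by_contra hcon
    push_neg at hcon
    set W : Submodule (ZMod 2) (Fin n → ZMod 2) := LinearMap.range M2.mulVecLin with hW
    have hdW : d ∉ W := by
      rintro ⟨y, hy⟩
      exact hcon y (by simpa using hy)
    have hne : Submodule.Quotient.mk (p := W) d ≠ 0 := by
      rw [Ne, Submodule.Quotient.mk_eq_zero]; exact hdW
    have : ¬ ∀ φ : Module.Dual (ZMod 2) ((Fin n → ZMod 2) ⧸ W),
        φ (Submodule.Quotient.mk d) = 0 := by
      rw [Module.forall_dual_apply_eq_zero_iff]; exact hne
    push_neg at this
    obtain ⟨φ, hφ⟩ := this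
    set g : (Fin n → ZMod 2) →ₗ[ZMod 2] ZMod 2 := φ.comp W.mkQ with hg
    set y : Fin n → ZMod 2 := fun i => g (fun j => if i = j then 1 else 0) with hy
    have hgdot : ∀ x : Fin n → ZMod 2, g x = y ⬝ᵥ x := by
      intro x
      conv_lhs => rw [pi_eq_sum_univ x, map_sum]
      rw [dotProduct]
      refine Finset.sum_congr rfl fun i _ => ?_
      rw [LinearMap.map_smul, smul_eq_mul]
      exact mul_comm _ _
    have hg0 : ∀ x : Fin n → ZMod 2, g x = 0 → True := fun _ _ => trivial
    have hgW : ∀ x : Fin n → ZMod 2, g (M2.mulVec x) = 0 := by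
      intro x
      have hmem : M2.mulVec x ∈ W := ⟨x, by simp⟩
      simp only [hg, LinearMap.comp_apply, Submodule.mkQ_apply]
      rw [(Submodule.Quotient.mk_eq_zero W).2 hmem, map_zero]
    have hyM : M2.mulVec y = 0 := by
      funext j
      have h1 : y ⬝ᵥ M2.mulVec (Pi.single j 1) = 0 := by
        rw [← hgdot]; exact hgW _
      have h2 : y ⬝ᵥ M2.mulVec (Pi.single j 1) = (M2.mulVec y) j := by
        rw [Matrix.dotProduct_mulVec]
        have : y ᵥ* M2 = M2.mulVec y := by
          conv_lhs => rw [← hM2]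
          exact Matrix.vecMul_transpose M2 y
        rw [this, dotProduct_single, mul_one]
      rw [h2] at h1
      simpa using h1
    have hgd : g d = 0 := by
      rw [hgdot]
      have : y ⬝ᵥ d = ∑ i, M2 i i * y i := by
        rw [dotProduct]; exact Finset.sum_congr rfl fun i _ => mul_comm _ _
      rw [this, ← quad_diag M2 hM2 y, hyM]
      simp
    have : φ (Submodule.Quotient.mk d) = 0 := by
      simpa [hg] using hgd
    exact hφ this
  obtain ⟨y, hy⟩ := hsolve
  refine ⟨fun i => ((y i).val : ℤ), ?_⟩
  have hyc : f ∘ (fun i => ((y i).val : ℤ)) = y := by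
    funext i
    simp [hf, ZMod.natCast_val, ZMod.intCast_cast, ZMod.intCast_zmod_cast]
  intro x
  apply (ZMod.intCast_eq_intCast_iff _ _ 2).mp
  show f _ = f _
  rw [cast_dot, cast_dot, hyc]
  rw [quad_diag M2 hM2 (f ∘ x)]
  rw [Matrix.dotProduct_mulVec]
  have hvm : y ᵥ* M2 = M2.mulVec y := by
    conv_lhs => rw [← hM2]
    exact Matrix.vecMul_transpose M2 y
  rw [hvm, hy]
  simp [hd, dotProduct]

end Aux

theorem stmt19 (r N : ℕ) (B : Matrix (Fin r) (Fin r) ℤ) (hsymm : B.IsSymm)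
    (hneg : ∀ x : Fin r → ℤ, x ≠ 0 → x ⬝ᵥ B.mulVec x < 0)
    (hmin : ∀ x : Fin r → ℤ, x ⬝ᵥ B.mulVec x ≠ -1)
    (L : Matrix (Fin r ⊕ Fin N) (Fin r ⊕ Fin N) ℤ)
    (hL : L = Matrix.fromBlocks B 0 0 (-(1 : Matrix (Fin N) (Fin N) ℤ))) :
    ∃ m : ℤ,
      IsGreatest {v : ℤ | ∃ c : Fin r ⊕ Fin N → ℤ, IsCharacteristic L c ∧
        v = c ⬝ᵥ L.mulVec c + (r + N)} m ∧
      IsGreatest {v : ℤ | ∃ c' : Fin r → ℤ, IsCharacteristic B c' ∧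
        v = c' ⬝ᵥ B.mulVec c' + r} m ∧
      m ≤ r := by
  classical
  -- quadratic form values are ≤ 0
  have hqle : ∀ x : Fin r → ℤ, x ⬝ᵥ B.mulVec x ≤ 0 := by
    intro x
    by_cases hx : x = 0
    · subst hx; simp
    · exact le_of_lt (hneg x hx)
  -- the L-quadratic form in block coordinates
  have hLval : ∀ u : Fin r → ℤ, ∀ v : Fin N → ℤ,
      Sum.elim u v ⬝ᵥ L.mulVec (Sum.elim u v) = u ⬝ᵥ B.mulVec u - v ⬝ᵥ v := by
    intro u v
    rw [hL, Matrix.fromBlocks_mulVec]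
    simp [sumElim_dotProduct_sumElim, Matrix.neg_mulVec, sub_eq_add_neg]
  have hLval' : ∀ u : Fin r → ℤ, ∀ v w : Fin N → ℤ, ∀ u' : Fin r → ℤ,
      Sum.elim u v ⬝ᵥ L.mulVec (Sum.elim u' w) = u ⬝ᵥ B.mulVec u' - v ⬝ᵥ w := by
    intro u v w u'
    rw [hL, Matrix.fromBlocks_mulVec]
    simp [sumElim_dotProduct_sumElim, Matrix.neg_mulVec, sub_eq_add_neg]
  -- decomposition of characteristic vectors of L
  have hchar_inl : ∀ c : Fin r ⊕ Fin N → ℤ, IsCharacteristic L c →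
      IsCharacteristic B (c ∘ Sum.inl) := by
    intro c hc x
    have := hc (Sum.elim x 0)
    have hc' : c = Sum.elim (c ∘ Sum.inl) (c ∘ Sum.inr) := (Sum.elim_comp_inl_inr c).symm
    rw [hc'] at this
    rw [hLval, hLval'] at this
    simpa using this
  have hchar_inr : ∀ c : Fin r ⊕ Fin N → ℤ, IsCharacteristic L c →
      ∀ i : Fin N, c (Sum.inr i) ≡ 1 [ZMOD 2] := by
    intro c hc i
    have := hc (Sum.elim 0 (Pi.single i 1))
    have hc' : c = Sum.elim (c ∘ Sum.inl) (c ∘ Sum.inr) := (Sum.elim_comp_inl_inr c).symm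
    rw [hc'] at this
    rw [hLval, hLval'] at this
    simp [dotProduct_single, single_dotProduct] at this
    have h2 : -(c (Sum.inr i)) ≡ -1 [ZMOD 2] := by
      simpa [dotProduct] using this
    have := h2.neg
    simpa using this
  -- odd coordinates have square ≥ 1
  have hodd_sq : ∀ k : ℤ, k ≡ 1 [ZMOD 2] → 1 ≤ k * k := by
    intro k hk
    have hk0 : k ≠ 0 := by
      have h : k % 2 = 1 % 2 := hk
      omega
    have hpos : 0 < k * k := mul_self_pos.mpr hk0
    simpa using Int.lt_iff_add_one_le.mp hpos
  -- sum of squares of odd coordinates is at least N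
  have hvv : ∀ c : Fin r ⊕ Fin N → ℤ, IsCharacteristic L c →
      (N : ℤ) ≤ (c ∘ Sum.inr) ⬝ᵥ (c ∘ Sum.inr) := by
    intro c hc
    have : (N : ℤ) = ∑ _i : Fin N, (1 : ℤ) := by simp
    rw [this, dotProduct]
    exact Finset.sum_le_sum fun i _ => hodd_sq _ (hchar_inr c hc i)
  -- extension of a characteristic vector of B to one of L
  have hext : ∀ c' : Fin r → ℤ, IsCharacteristic B c' →
      IsCharacteristic L (Sum.elim c' (fun _ => 1)) := by
    intro c' hc' x
    rw [← Sum.elim_comp_inl_inr x]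
    rw [hLval, hLval']
    have h1 := hc' (x ∘ Sum.inl)
    have h2 : (fun _ : Fin N => (1 : ℤ)) ⬝ᵥ (x ∘ Sum.inr) ≡
        (x ∘ Sum.inr) ⬝ᵥ (x ∘ Sum.inr) [ZMOD 2] := by
      apply (ZMod.intCast_eq_intCast_iff _ _ 2).mp
      simp only [dotProduct]
      push_cast
      simp [zmod2_mul_self]
    exact h1.sub h2
  -- the maximum for B
  have hbd : ∀ z : ℤ, (∃ c' : Fin r → ℤ, IsCharacteristic B c' ∧
      z = c' ⬝ᵥ B.mulVec c' + r) → z ≤ r := by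
    rintro z ⟨c', _, rfl⟩
    have := hqle c'
    linarith
  obtain ⟨c₀, hc₀⟩ := exists_characteristic B hsymm
  obtain ⟨m, hmP, hmub⟩ := Int.exists_greatest_of_bdd (P := fun v : ℤ =>
      ∃ c' : Fin r → ℤ, IsCharacteristic B c' ∧ v = c' ⬝ᵥ B.mulVec c' + r)
    ⟨r, hbd⟩ ⟨c₀ ⬝ᵥ B.mulVec c₀ + r, c₀, hc₀, rfl⟩
  obtain ⟨c₁, hc₁, hm⟩ := hmP
  have hNone : (fun _ : Fin N => (1 : ℤ)) ⬝ᵥ (fun _ => (1 : ℤ)) = (N : ℤ) := by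
    simp [dotProduct]
  refine ⟨m, ⟨⟨Sum.elim c₁ (fun _ => 1), hext c₁ hc₁, ?_⟩, ?_⟩,
    ⟨⟨c₁, hc₁, hm⟩, fun z hz => hmub z hz⟩, hbd m ⟨c₁, hc₁, hm⟩⟩
  · rw [hLval]
    rw [hNone]
    push_cast
    linarith [hm]
  · rintro z ⟨c, hc, rfl⟩
    have hdec : c = Sum.elim (c ∘ Sum.inl) (c ∘ Sum.inr) := (Sum.elim_comp_inl_inr c).symm
    have hval : c ⬝ᵥ L.mulVec c =
        (c ∘ Sum.inl) ⬝ᵥ B.mulVec (c ∘ Sum.inl) - (c ∘ Sum.inr) ⬝ᵥ (c ∘ Sum.inr) := by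
      conv_lhs => rw [hdec]
      exact hLval _ _
    have h1 := hmub ((c ∘ Sum.inl) ⬝ᵥ B.mulVec (c ∘ Sum.inl) + r)
      ⟨c ∘ Sum.inl, hchar_inl c hc, rfl⟩
    have h2 := hvv c hc
    rw [hval]
    push_cast
    linarith
end
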